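/- arXiv:1205.4340 — 2 statements merged into one kernel-verified Lean document; each statement's English description precedes it below -/
import Mathlib

section
/- Gauss' square-number identity: 1 + 2 ∑_{j=1}^{∞} (-1)^j q^{j²} = (q;q)_∞ / (-q;q)_∞ for |q| < 1 (equivalently as formal power series). -/
/-!
Cauchy's q-binomial theorem with base `q²`, applied to `∏_{k<2n} (q^{2n} - q^{2k+1})`, gives the
finite identity `(q;q²)_n² = ∑_{|i| ≤ n} (-1)^i q^{i²} [2n, n+i]_{q²}`. For fixed `i` the Gaussian
binomial `[2n, n+i]_{q²} = (q²;q²)_{2n} / ((q²;q²)_{n+i} (q²;q²)_{n-i})` tends to `1/(q²;q²)_∞`, and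
all of them are bounded by one constant, so Tannery's theorem gives
`∑_{i∈ℤ} (-1)^i q^{i²} = (q;q²)_∞² (q²;q²)_∞`. Finally `(q;q)_∞ = (q;q²)_∞ (q²;q²)_∞` (odd and even
factors) and `(q;q)_∞ (-q;q)_∞ = (q²;q²)_∞`, so `(-q;q)_∞ = 1/(q;q²)_∞` and the right-hand side is
`(q;q)_∞ / (-q;q)_∞`.
-/

/-- infinite q-Pochhammer symbol `(a;q)_∞` -/
noncomputable def qPochInf (a q : ℂ) : ℂ := ∏' n : ℕ, (1 - a * q ^ n)

open Finset Filter Topology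

section Algebra

variable {R : Type*} [CommRing R]

def qPoch (a q : R) (n : ℕ) : R := ∏ k ∈ range n, (1 - a * q ^ k)

lemma qPoch_succ (a q : R) (n : ℕ) : qPoch a q (n + 1) = qPoch a q n * (1 - a * q ^ n) :=
  prod_range_succ _ _

def gaussBinom (p : R) : ℕ → ℕ → R
  | _, 0 => 1
  | 0, _ + 1 => 0
  | m + 1, j + 1 => gaussBinom p m j + p ^ (j + 1) * gaussBinom p m (j + 1)

variable (p : R)

@[simp] lemma gaussBinom_zero_right (m : ℕ) : gaussBinom p m 0 = 1 := by
  cases m <;> rfl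

lemma gaussBinom_succ_succ (m j : ℕ) :
    gaussBinom p (m + 1) (j + 1) = gaussBinom p m j + p ^ (j + 1) * gaussBinom p m (j + 1) := rfl

lemma gaussBinom_eq_zero_of_lt {m j : ℕ} (h : m < j) : gaussBinom p m j = 0 := by
  induction m generalizing j with
  | zero => obtain ⟨j, rfl⟩ := Nat.exists_eq_succ_of_ne_zero h.ne'; rfl
  | succ m ih =>
    obtain ⟨j, rfl⟩ := Nat.exists_eq_succ_of_ne_zero (Nat.ne_zero_of_lt h)
    rw [gaussBinom_succ_succ, ih (by omega), ih (by omega), mul_zero, add_zero]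

@[simp] lemma gaussBinom_self (m : ℕ) : gaussBinom p m m = 1 := by
  induction m with
  | zero => rfl
  | succ m ih =>
    rw [gaussBinom_succ_succ, ih, gaussBinom_eq_zero_of_lt p m.lt_succ_self, mul_zero, add_zero]

theorem gaussBinom_mul_qPoch_mul_qPoch (a b : ℕ) :
    gaussBinom p (a + b) a * (qPoch p p a * qPoch p p b) = qPoch p p (a + b) := by
  induction a generalizing b with
  | zero => simp [qPoch]
  | succ a iha =>
    induction b with
    | zero => simp [qPoch]
    | succ b ihb =>
      have iha' := iha (b + 1)
      rw [← add_assoc, qPoch_succ p p b] at iha'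
      rw [add_right_comm, qPoch_succ p p a] at ihb
      rw [show a + 1 + (b + 1) = a + b + 1 + 1 by omega, gaussBinom_succ_succ,
        qPoch_succ p p (a + b + 1), qPoch_succ p p a, qPoch_succ p p b]
      linear_combination (1 - p * p ^ a) * iha' + p ^ (a + 1) * (1 - p * p ^ b) * ihb

theorem prod_add_mul_pow_eq_sum_gaussBinom (x y : R) (m : ℕ) :
    ∏ k ∈ range m, (y + x * p ^ k) =
      ∑ j ∈ range (m + 1), p ^ j.choose 2 * x ^ j * y ^ (m - j) * gaussBinom p m j := by
  induction m generalizing x with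
  | zero => simp
  | succ m ih =>
    set S := ∑ j ∈ range (m + 1), p ^ j.choose 2 * (x * p) ^ j * y ^ (m - j) * gaussBinom p m j
    have hS : ∏ k ∈ range m, (y + x * p ^ (k + 1)) = S :=
      (prod_congr rfl fun k _ => by ring).trans (ih (x * p))
    have hx : ∑ j ∈ range (m + 1), p ^ (j + 1).choose 2 * x ^ (j + 1) * y ^ (m + 1 - (j + 1)) *
        gaussBinom p m j = x * S := by
      rw [mul_sum]
      refine sum_congr rfl fun j _ => ?_
      rw [Nat.choose_succ_succ', Nat.choose_one_right, Nat.add_sub_add_right]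
      ring
    have hy : ∑ j ∈ range (m + 1), p ^ (j + 1).choose 2 * x ^ (j + 1) * y ^ (m + 1 - (j + 1)) *
        (p ^ (j + 1) * gaussBinom p m (j + 1)) + y ^ (m + 1) = y * S := by
      rw [mul_sum, sum_range_succ, gaussBinom_eq_zero_of_lt p m.lt_succ_self, sum_range_succ']
      have hterm : ∀ j ∈ range m, p ^ (j + 1).choose 2 * x ^ (j + 1) * y ^ (m + 1 - (j + 1)) *
          (p ^ (j + 1) * gaussBinom p m (j + 1)) =
            y * (p ^ (j + 1).choose 2 * (x * p) ^ (j + 1) * y ^ (m - (j + 1)) *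
              gaussBinom p m (j + 1)) := by
        intro j hj
        rw [Nat.add_sub_add_right, show m - j = m - (j + 1) + 1 by have := mem_range.1 hj; omega]
        ring
      rw [sum_congr rfl hterm]
      simp only [tsub_self, pow_zero, mul_one, mul_zero, add_zero, Nat.choose_zero_succ, tsub_zero,
        one_mul, gaussBinom_zero_right, add_right_inj]
      ring
    rw [prod_range_succ', hS,
      sum_range_succ' fun j => p ^ j.choose 2 * x ^ j * y ^ (m + 1 - j) * gaussBinom p (m + 1) j]
    simp only [gaussBinom_succ_succ, mul_add, sum_add_distrib, hx]
    simp only [Nat.choose_zero_succ, pow_zero, Nat.sub_zero, gaussBinom_zero_right]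
    linear_combination -hy

lemma prod_range_mul_sq_pow (q : R) (n : ℕ) : ∏ k ∈ range n, q * (q ^ 2) ^ k = q ^ (n ^ 2) := by
  induction n with
  | zero => simp
  | succ n ih => rw [prod_range_succ, ih]; ring

lemma Nat.choose_two_mul_two_add_self (j : ℕ) : j.choose 2 * 2 + j = j * j := by
  induction j with
  | zero => simp
  | succ j ih => rw [Nat.choose_succ_succ', Nat.choose_one_right]; linarith

lemma sq_pow_choose_two_mul_neg_pow_mul_pow (q : R) {n : ℕ} {i : ℤ} (hi : i.natAbs ≤ n) :
    (q ^ 2) ^ (n + i).toNat.choose 2 * (-q) ^ (n + i).toNat *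
        (q ^ (2 * n)) ^ (2 * n - (n + i).toNat) =
      (-1) ^ n * q ^ (3 * n ^ 2) * ((-1) ^ i.natAbs * q ^ (i.natAbs ^ 2)) := by
  set j := (n + i).toNat
  have hjn : (j : ℤ) = n + i := Int.toNat_of_nonneg (by omega)
  have hexp : 2 * j.choose 2 + j + 2 * n * (2 * n - j) = 3 * n ^ 2 + i.natAbs ^ 2 := by
    have hc := Nat.choose_two_mul_two_add_self j
    zify [show j ≤ 2 * n by omega] at hc ⊢
    rw [sq_abs, hjn] at *
    linear_combination hc
  have hsign : (-1 : R) ^ j = (-1) ^ n * (-1) ^ i.natAbs := by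
    rw [← pow_add]
    exact neg_one_pow_congr (by simp only [Nat.even_iff]; omega)
  calc (q ^ 2) ^ j.choose 2 * (-q) ^ j * (q ^ (2 * n)) ^ (2 * n - j)
      = (-1) ^ j * q ^ (2 * j.choose 2 + j + 2 * n * (2 * n - j)) := by rw [neg_pow]; ring
    _ = _ := by rw [hexp, hsign]; ring

lemma prod_range_two_mul_add_neg_mul_sq_pow (q : R) (n : ℕ) :
    ∏ k ∈ range (2 * n), (q ^ (2 * n) + -q * (q ^ 2) ^ k) =
      (-1) ^ n * q ^ (3 * n ^ 2) * qPoch q (q ^ 2) n ^ 2 := by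
  have hlow : ∀ k ∈ range n, q ^ (2 * n) + -q * (q ^ 2) ^ k =
      -(q * (q ^ 2) ^ k) * (1 - q * (q ^ 2) ^ (n - 1 - k)) := by
    intro k hk
    have h2n : 2 * n = 2 * k + 1 + (2 * (n - 1 - k) + 1) := by have := mem_range.1 hk; omega
    rw [h2n]
    ring
  have hhigh : ∀ k ∈ range n, q ^ (2 * n) + -q * (q ^ 2) ^ (n + k) =
      (q ^ 2) ^ n * (1 - q * (q ^ 2) ^ k) := fun k _ => by ring
  have hrefl : ∏ k ∈ range n, (1 - q * (q ^ 2) ^ (n - 1 - k)) = qPoch q (q ^ 2) n :=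
    prod_range_reflect (fun k => 1 - q * (q ^ 2) ^ k) n
  rw [show range (2 * n) = range (n + n) by rw [two_mul], prod_range_add, prod_congr rfl hlow,
    prod_congr rfl hhigh, prod_mul_distrib, prod_mul_distrib, hrefl, prod_neg,
    prod_range_mul_sq_pow, prod_const, card_range, ← qPoch]
  ring

theorem qPoch_sq_eq_sum_gaussBinom [IsDomain R] {q : R} (hq : q ≠ 0) (n : ℕ) :
    qPoch q (q ^ 2) n ^ 2 = ∑ i ∈ Icc (-n : ℤ) n,
      (-1) ^ i.natAbs * q ^ (i.natAbs ^ 2) * gaussBinom (q ^ 2) (2 * n) (n + i).toNat := by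
  have hbin := prod_add_mul_pow_eq_sum_gaussBinom (q ^ 2) (-q) (q ^ (2 * n)) (2 * n)
  have hsum : ∑ j ∈ range (2 * n + 1), (q ^ 2) ^ j.choose 2 * (-q) ^ j *
      (q ^ (2 * n)) ^ (2 * n - j) * gaussBinom (q ^ 2) (2 * n) j =
        (-1) ^ n * q ^ (3 * n ^ 2) * ∑ i ∈ Icc (-n : ℤ) n,
          (-1) ^ i.natAbs * q ^ (i.natAbs ^ 2) * gaussBinom (q ^ 2) (2 * n) (n + i).toNat := by
    rw [mul_sum]
    symm
    refine sum_nbij' (fun i => (n + i).toNat) (fun j => (j : ℤ) - n) ?_ ?_ ?_ ?_ fun i hi => ?_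
    · intro i hi
      simp only [mem_Icc, mem_range] at hi ⊢
      omega
    · intro j hj
      simp only [mem_Icc, mem_range] at hj ⊢
      omega
    · intro i hi
      simp only [mem_Icc] at hi
      omega
    · intro j hj
      simp
    · rw [sq_pow_choose_two_mul_neg_pow_mul_pow q (by simp only [mem_Icc] at hi; omega)]
      ring
  rw [prod_range_two_mul_add_neg_mul_sq_pow, hsum] at hbin
  exact mul_left_cancel₀ (mul_ne_zero (pow_ne_zero _ (neg_ne_zero.2 one_ne_zero))
    (pow_ne_zero _ hq)) hbin

end Algebra

section Analysis

variable {a p q : ℂ}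

lemma norm_sq_lt_one (hq : ‖q‖ < 1) : ‖q ^ 2‖ < 1 := by
  rw [norm_pow]
  exact pow_lt_one₀ (norm_nonneg q) hq two_ne_zero

lemma summable_norm_mul_pow (hq : ‖q‖ < 1) (a : ℂ) : Summable fun n : ℕ => ‖a * q ^ n‖ := by
  simpa [norm_mul, norm_pow] using (summable_geometric_of_lt_one (norm_nonneg q) hq).mul_left ‖a‖

lemma hasProd_qPochInf (hq : ‖q‖ < 1) (a : ℂ) :
    HasProd (fun n => 1 - a * q ^ n) (qPochInf a q) := by
  have := (multipliable_one_add_of_summable (f := fun n => -(a * q ^ n))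
    (by simpa only [norm_neg] using summable_norm_mul_pow hq a)).hasProd
  simp only [← sub_eq_add_neg] at this
  exact this

lemma tendsto_qPoch (hq : ‖q‖ < 1) (a : ℂ) : Tendsto (qPoch a q) atTop (𝓝 (qPochInf a q)) :=
  (hasProd_qPochInf hq a).tendsto_prod_nat

lemma one_sub_mul_pow_ne_zero (ha : ‖a‖ < 1) (hq : ‖q‖ ≤ 1) (n : ℕ) : 1 - a * q ^ n ≠ 0 := by
  intro h
  have : ‖a * q ^ n‖ < 1 := by
    rw [norm_mul, norm_pow]
    exact (mul_le_of_le_one_right (norm_nonneg a) (pow_le_one₀ (norm_nonneg q) hq)).trans_lt ha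
  rw [← sub_eq_zero.1 h, norm_one] at this
  exact lt_irrefl _ this

lemma qPoch_ne_zero (ha : ‖a‖ < 1) (hq : ‖q‖ ≤ 1) (n : ℕ) : qPoch a q n ≠ 0 :=
  prod_ne_zero_iff.2 fun k _ => one_sub_mul_pow_ne_zero ha hq k

lemma qPochInf_ne_zero (ha : ‖a‖ < 1) (hq : ‖q‖ < 1) : qPochInf a q ≠ 0 := by
  simpa [qPochInf, sub_eq_add_neg] using tprod_one_add_ne_zero_of_summable
    (fun n => by simpa [sub_eq_add_neg] using one_sub_mul_pow_ne_zero ha hq.le n)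
    (by simpa only [norm_neg] using summable_norm_mul_pow hq a)

lemma qPochInf_even_mul_odd (hq : ‖q‖ < 1) (a : ℂ) :
    qPochInf a (q ^ 2) * qPochInf (a * q) (q ^ 2) = qPochInf a q := by
  refine (HasProd.even_mul_odd ?_ ?_).unique (hasProd_qPochInf hq a)
  · convert hasProd_qPochInf (norm_sq_lt_one hq) a using 2 with k
    ring
  · convert hasProd_qPochInf (norm_sq_lt_one hq) (a * q) using 2 with k
    ring

lemma qPochInf_mul_qPochInf_neg (hq : ‖q‖ < 1) (a : ℂ) :
    qPochInf a q * qPochInf (-a) q = qPochInf (a ^ 2) (q ^ 2) := by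
  refine ((hasProd_qPochInf hq a).mul (hasProd_qPochInf hq (-a))).unique ?_
  convert hasProd_qPochInf (norm_sq_lt_one hq) (a ^ 2) using 2 with k
  ring

lemma gaussBinom_eq_div (hp : ‖p‖ < 1) (a b : ℕ) :
    gaussBinom p (a + b) a = qPoch p p (a + b) / (qPoch p p a * qPoch p p b) :=
  eq_div_of_mul_eq (mul_ne_zero (qPoch_ne_zero hp hp.le a) (qPoch_ne_zero hp hp.le b))
    (gaussBinom_mul_qPoch_mul_qPoch p a b)

theorem tendsto_gaussBinom (hp : ‖p‖ < 1) {α : Type*} {l : Filter α} {a b : α → ℕ}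
    (ha : Tendsto a l atTop) (hb : Tendsto b l atTop) :
    Tendsto (fun x => gaussBinom p (a x + b x) (a x)) l (𝓝 (qPochInf p p)⁻¹) := by
  have hP := tendsto_qPoch hp p
  have h0 := qPochInf_ne_zero hp hp
  have := (hP.comp (ha.atTop_add_atTop hb)).div ((hP.comp ha).mul (hP.comp hb)) (mul_ne_zero h0 h0)
  rw [div_mul_cancel_left₀ h0] at this
  exact this.congr fun x => (gaussBinom_eq_div hp _ _).symm

theorem exists_norm_gaussBinom_le (hp : ‖p‖ < 1) : ∃ C, ∀ m j, ‖gaussBinom p m j‖ ≤ C := by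
  obtain ⟨M, hM⟩ := Asymptotics.isBigO_one_nat_atTop_iff.1 ((tendsto_qPoch hp p).isBigO_one ℝ)
  obtain ⟨K, hK⟩ := Asymptotics.isBigO_one_nat_atTop_iff.1
    (((tendsto_qPoch hp p).inv₀ (qPochInf_ne_zero hp hp)).isBigO_one ℝ)
  have hM0 : 0 ≤ M := (norm_nonneg _).trans (hM 0)
  have hK0 : 0 ≤ K := (norm_nonneg _).trans (hK 0)
  refine ⟨M * (K * K), fun m j => ?_⟩
  rcases le_or_gt j m with h | h
  · obtain ⟨b, rfl⟩ := Nat.exists_eq_add_of_le h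
    rw [gaussBinom_eq_div hp, div_eq_mul_inv, mul_inv, norm_mul, norm_mul]
    gcongr
    exacts [hM _, hK j, hK b]
  · rw [gaussBinom_eq_zero_of_lt p h, norm_zero]
    positivity

lemma summable_pow_natAbs {r : ℝ} (h0 : 0 ≤ r) (h1 : r < 1) :
    Summable fun i : ℤ => r ^ i.natAbs :=
  summable_int_iff_summable_nat_and_neg.2
    ⟨by simpa using summable_geometric_of_lt_one h0 h1,
      by simpa using summable_geometric_of_lt_one h0 h1⟩

lemma norm_neg_one_pow_mul_pow_sq_le (hq : ‖q‖ ≤ 1) (k : ℕ) :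
    ‖(-1) ^ k * q ^ (k ^ 2)‖ ≤ ‖q‖ ^ k := by
  rw [norm_mul, norm_pow, norm_pow, norm_neg, norm_one, one_pow, one_mul]
  exact pow_le_pow_of_le_one (norm_nonneg q) hq (Nat.le_self_pow two_ne_zero k)

theorem tsum_int_neg_one_pow_mul_pow_sq (hq0 : q ≠ 0) (hq : ‖q‖ < 1) :
    ∑' i : ℤ, (-1) ^ i.natAbs * q ^ (i.natAbs ^ 2) =
      qPochInf q (q ^ 2) ^ 2 * qPochInf (q ^ 2) (q ^ 2) := by
  have hq2 := norm_sq_lt_one hq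
  let F : ℕ → ℤ → ℂ := fun n => (Icc (-n : ℤ) n : Set ℤ).indicator fun i =>
    (-1) ^ i.natAbs * q ^ (i.natAbs ^ 2) * gaussBinom (q ^ 2) (2 * n) (n + i).toNat
  have hfin : ∀ n, ∑' i, F n i = qPoch q (q ^ 2) n ^ 2 := fun n => by
    rw [qPoch_sq_eq_sum_gaussBinom hq0, sum_eq_tsum_indicator]
  obtain ⟨C, hC⟩ := exists_norm_gaussBinom_le hq2
  have hlim : Tendsto (fun n => ∑' i, F n i) atTop
      (𝓝 (∑' i : ℤ, (-1) ^ i.natAbs * q ^ (i.natAbs ^ 2) * (qPochInf (q ^ 2) (q ^ 2))⁻¹)) := by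
    refine tendsto_tsum_of_dominated_convergence
      ((summable_pow_natAbs (norm_nonneg q) hq).mul_left C) (fun i => ?_)
      (Eventually.of_forall fun n i => ?_)
    · have ha : Tendsto (fun n : ℕ => ((n : ℤ) + i).toNat) atTop atTop :=
        tendsto_atTop_atTop.2 fun b => ⟨b + i.natAbs, fun n hn => by omega⟩
      have hb : Tendsto (fun n : ℕ => ((n : ℤ) - i).toNat) atTop atTop :=
        tendsto_atTop_atTop.2 fun b => ⟨b + i.natAbs, fun n hn => by omega⟩
      refine ((tendsto_gaussBinom hq2 ha hb).const_mul _).congr' ?_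
      filter_upwards [eventually_ge_atTop i.natAbs] with n hn
      dsimp only [F]
      rw [Set.indicator_of_mem (by simp only [coe_Icc, Set.mem_Icc]; omega),
        show ((n : ℤ) + i).toNat + ((n : ℤ) - i).toNat = 2 * n by omega]
    · refine (norm_indicator_le_norm_self _ _).trans ?_
      rw [norm_mul, mul_comm C]
      exact mul_le_mul (norm_neg_one_pow_mul_pow_sq_le hq.le _) (hC _ _) (norm_nonneg _)
        (pow_nonneg (norm_nonneg q) _)
  rw [funext hfin, tsum_mul_right] at hlim
  rw [tendsto_nhds_unique ((tendsto_qPoch hq2 q).pow 2) hlim,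
    inv_mul_cancel_right₀ (qPochInf_ne_zero hq2 hq2)]

theorem tsum_int_neg_one_pow_mul_pow_sq_eq_one_add_two_mul (hq : ‖q‖ < 1) :
    ∑' i : ℤ, (-1) ^ i.natAbs * q ^ (i.natAbs ^ 2) =
      1 + 2 * ∑' j : ℕ, (-1 : ℂ) ^ (j + 1) * q ^ ((j + 1) ^ 2) := by
  have hsum : Summable fun i : ℤ => (-1 : ℂ) ^ i.natAbs * q ^ (i.natAbs ^ 2) :=
    (summable_pow_natAbs (norm_nonneg q) hq).of_norm_bounded
      fun i => norm_neg_one_pow_mul_pow_sq_le hq.le _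
  rw [tsum_int_eq_zero_add_two_mul_tsum_pnat (fun i => by simp) hsum]
  simp only [Int.natAbs_natCast]
  rw [tsum_pnat_eq_tsum_succ (f := fun k => (-1 : ℂ) ^ k * q ^ (k ^ 2))]
  simp

end Analysis

theorem gauss_square_identity (q : ℂ) (hq : ‖q‖ < 1) :
    1 + 2 * ∑' j : ℕ, (-1 : ℂ) ^ (j + 1) * q ^ ((j + 1) ^ 2) =
    qPochInf q q / qPochInf (-q) q := by
  rcases eq_or_ne q 0 with rfl | hq0
  · simp [qPochInf]
  have hsplit := qPochInf_even_mul_odd hq q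
  have heuler := qPochInf_mul_qPochInf_neg hq q
  rw [← sq] at hsplit
  rw [← tsum_int_neg_one_pow_mul_pow_sq_eq_one_add_two_mul hq,
    tsum_int_neg_one_pow_mul_pow_sq hq0 hq, eq_div_iff (qPochInf_ne_zero (by rwa [norm_neg]) hq)]
  linear_combination qPochInf q (q ^ 2) * heuler +
    (qPochInf q (q ^ 2) * qPochInf (-q) q + 1) * hsplit
end

section
/- The function p_od satisfies, for all n ≥ 1: ∑_{j=0}^{∞} (-1)^j ( p_od(n - j(2j+1)) - p_od(n - (j+1)(2j+1)) ) = 0, where p_od(m) = 0 for m < 0 (the sum is finite). -/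
/-- number of partitions of `n` in which the odd parts are distinct -/
def podCount (n : ℕ) : ℕ :=
  (Finset.univ.filter
    (fun l : Nat.Partition n => (l.parts.filter (fun i => i % 2 = 1)).Nodup)).card

/-- `podCount` extended by `0` on negative integers -/
def pod (m : ℤ) : ℤ := if 0 ≤ m then podCount m.toNat else 0

/-
Let `P(q) = ∏ (1 + q^(2i+1)) / (1 - q^(2i+2)) = ∑ p_od(n) q^n` and
`Θ(q) = ∑_{k ∈ ℤ} (-1)^k q^(k(2k+1))`; the sum in the statement is the coefficient of `q^n` in
`Θ(q) P(q)`. By the Jacobi triple product `Θ(q) = (q; q²)_∞ (q⁴; q⁴)_∞`, and since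
`(q; q²)_∞ (-q; q²)_∞ = (q²; q⁴)_∞`, we get `Θ(q) P(q) = 1`.

Everything is carried out with finite products modulo `q^N`: the triple product comes from
Cauchy's `q`-binomial theorem applied to `∏_{i < 2m} (q^(4m) - q^(4i+3))` in base `q⁴`, combined
with the congruence `[2m, k]_{q⁴} (q⁴; q⁴)_m ≡ 1` modulo `q^(4 min(k, 2m-k) + 4)`.
-/

open Finset PowerSeries
open scoped PowerSeries.WithPiTopology

section SModEq

variable {A : Type*} [CommRing A]

lemma SModEq.of_mul_right_of_isUnit {I : Ideal A} {a b u : A}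
    (hu : IsUnit u) (h : a * u ≡ b * u [SMOD I]) : a ≡ b [SMOD I] := by
  obtain ⟨v, hv⟩ := hu.exists_right_inv
  simpa [mul_assoc, hv] using h.mul (SModEq.refl v)

lemma SModEq.mul_left_span {a b y : A} (x : A)
    (h : a ≡ b [SMOD Ideal.span {y}]) : x * a ≡ x * b [SMOD Ideal.span {x * y}] := by
  rw [SModEq.sub_mem, Ideal.mem_span_singleton] at h ⊢
  rw [← mul_sub]
  exact mul_dvd_mul_left x h

lemma PowerSeries.coeff_eq_of_smodEq {R : Type*} [CommRing R] {f g : R⟦X⟧} {N d : ℕ}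
    (h : f ≡ g [SMOD Ideal.span {X ^ N}]) (hd : d < N) : coeff d f = coeff d g := by
  rw [SModEq.sub_mem, Ideal.mem_span_singleton, X_pow_dvd_iff] at h
  simpa [sub_eq_zero] using h d hd

end SModEq

lemma Nat.succ_choose_two (k : ℕ) : (k + 1).choose 2 = k.choose 2 + k := by
  rw [Nat.choose_succ_succ, Nat.choose_one_right, add_comm]

section QAnalogues

variable {R : Type*} [CommRing R]

/-- The `q`-Pochhammer symbol `(a; q)_n`. -/
def qPochhammer (a q : R) (n : ℕ) : R :=
  ∏ i ∈ range n, (1 - a * q ^ i)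

@[simp]
lemma qPochhammer_zero (a q : R) : qPochhammer a q 0 = 1 := rfl

lemma qPochhammer_succ (a q : R) (n : ℕ) :
    qPochhammer a q (n + 1) = qPochhammer a q n * (1 - a * q ^ n) :=
  prod_range_succ _ _

lemma qPochhammer_add (a q : R) (m n : ℕ) :
    qPochhammer a q (m + n) = qPochhammer a q m * qPochhammer (a * q ^ m) q n := by
  simp only [qPochhammer, prod_range_add, pow_add, mul_assoc]

lemma qPochhammer_mul_qPochhammer_neg (a q : R) (n : ℕ) :
    qPochhammer a q n * qPochhammer (-a) q n = qPochhammer (a ^ 2) (q ^ 2) n := by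
  rw [qPochhammer, qPochhammer, qPochhammer, ← prod_mul_distrib]
  exact prod_congr rfl fun i _ ↦ by ring

lemma qPochhammer_two_mul (a q : R) (n : ℕ) :
    qPochhammer a q (2 * n) = qPochhammer a (q ^ 2) n * qPochhammer (a * q) (q ^ 2) n := by
  induction n with
  | zero => simp
  | succ n ih =>
    rw [show 2 * (n + 1) = 2 * n + 1 + 1 by ring, qPochhammer_succ, qPochhammer_succ, ih,
      qPochhammer_succ, qPochhammer_succ]
    ring

lemma qPochhammer_smodEq_one (a q : R) (n : ℕ) :
    qPochhammer a q n ≡ 1 [SMOD Ideal.span {a}] := by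
  have h (i : ℕ) (_ : i ∈ range n) : 1 - a * q ^ i ≡ 1 [SMOD Ideal.span {a}] := by
    rw [SModEq.sub_mem, sub_sub_cancel_left, neg_mem_iff, Ideal.mem_span_singleton]
    exact dvd_mul_right a _
  simpa [qPochhammer] using SModEq.prod h

/-- The Gaussian binomial coefficient `[n, k]_q`. -/
def qBinomial (q : R) : ℕ → ℕ → R
  | _, 0 => 1
  | 0, _ + 1 => 0
  | n + 1, k + 1 => qBinomial q n k + q ^ (k + 1) * qBinomial q n (k + 1)

variable (q : R)

@[simp]
lemma qBinomial_zero_right (n : ℕ) : qBinomial q n 0 = 1 := by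
  cases n <;> rfl

lemma qBinomial_succ_succ (n k : ℕ) :
    qBinomial q (n + 1) (k + 1) = qBinomial q n k + q ^ (k + 1) * qBinomial q n (k + 1) := rfl

lemma qBinomial_eq_zero_of_lt {n k : ℕ} (h : n < k) : qBinomial q n k = 0 := by
  induction n generalizing k with
  | zero => obtain ⟨k, rfl⟩ := Nat.exists_eq_succ_of_ne_zero h.ne'; rfl
  | succ n ih =>
    obtain ⟨k, rfl⟩ := Nat.exists_eq_succ_of_ne_zero (by omega : k ≠ 0)
    rw [qBinomial_succ_succ, ih (by omega), ih (by omega), mul_zero, add_zero]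

@[simp]
lemma qBinomial_self (n : ℕ) : qBinomial q n n = 1 := by
  induction n with
  | zero => rfl
  | succ n ih => rw [qBinomial_succ_succ, ih, qBinomial_eq_zero_of_lt q n.lt_succ_self]; ring

lemma qBinomial_add_mul_qPochhammer (k l : ℕ) :
    qBinomial q (k + l) k * qPochhammer q q k * qPochhammer q q l = qPochhammer q q (k + l) := by
  induction k generalizing l with
  | zero => simp
  | succ k ih =>
    induction l with
    | zero => simp
    | succ l ihl =>
      have h := ih (l + 1)
      rw [show k + (l + 1) = k + 1 + l by ring, qPochhammer_succ q q l] at h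
      rw [qPochhammer_succ q q k] at ihl
      rw [show k + 1 + (l + 1) = k + 1 + l + 1 by ring, qBinomial_succ_succ, qPochhammer_succ,
        qPochhammer_succ q q l, qPochhammer_succ q q (k + 1 + l)]
      linear_combination (1 - q ^ (k + 1)) * h + q ^ (k + 1) * (1 - q ^ (l + 1)) * ihl

/-- Cauchy's `q`-binomial theorem, in homogeneous form. -/
theorem prod_add_mul_pow_eq_sum_qBinomial (y z : R) (n : ℕ) :
    ∏ i ∈ range n, (y + z * q ^ i) =
      ∑ k ∈ range (n + 1), q ^ k.choose 2 * qBinomial q n k * z ^ k * y ^ (n - k) := by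
  induction n generalizing z with
  | zero => simp
  | succ n ih =>
    -- the factors `i ≥ 1` form the product for `n` with `z * q` in place of `z`
    have hshift : ∏ i ∈ range n, (y + z * q ^ (i + 1)) = ∏ i ∈ range n, (y + z * q * q ^ i) :=
      prod_congr rfl fun i _ ↦ by ring
    have hy : ∑ k ∈ range (n + 1),
          q ^ k.choose 2 * qBinomial q n k * (z * q) ^ k * y ^ (n - k) * y =
        y ^ (n + 1) + ∑ k ∈ range (n + 1),
          q ^ (k + 1).choose 2 * (q ^ (k + 1) * qBinomial q n (k + 1)) * z ^ (k + 1) *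
            y ^ (n - k) := by
      rw [sum_range_succ', sum_range_succ _ n, qBinomial_eq_zero_of_lt q n.lt_succ_self]
      simp only [Nat.choose_zero_succ, pow_zero, qBinomial_zero_right, mul_one, one_mul,
        Nat.sub_zero, mul_zero, zero_mul, add_zero, ← pow_succ]
      rw [add_comm]
      congr 1
      refine sum_congr rfl fun k hk ↦ ?_
      rw [show n - k = n - (k + 1) + 1 by have := mem_range.mp hk; omega]
      ring
    have hz : ∑ k ∈ range (n + 1),
          q ^ k.choose 2 * qBinomial q n k * (z * q) ^ k * y ^ (n - k) * z =
        ∑ k ∈ range (n + 1), q ^ (k + 1).choose 2 * qBinomial q n k * z ^ (k + 1) * y ^ (n - k) :=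
      sum_congr rfl fun k _ ↦ by rw [Nat.succ_choose_two]; ring
    rw [prod_range_succ', hshift, ih, sum_range_succ' _ (n + 1)]
    simp only [qBinomial_succ_succ, Nat.choose_zero_succ, pow_zero, qBinomial_zero_right,
      mul_one, one_mul, Nat.sub_zero, Nat.add_sub_add_right, mul_add, add_mul, sum_add_distrib,
      sum_mul, hy, hz]
    ring

lemma qPochhammer_self_smodEq {s t : ℕ} (hst : s ≤ t) :
    qPochhammer q q t ≡ qPochhammer q q s [SMOD Ideal.span {q ^ (s + 1)}] := by
  obtain ⟨d, rfl⟩ := Nat.exists_eq_add_of_le hst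
  rw [qPochhammer_add, ← pow_succ']
  simpa using (SModEq.refl (qPochhammer q q s)).mul (qPochhammer_smodEq_one (q ^ (s + 1)) q d)

lemma qBinomial_mul_qPochhammer_smodEq_one {k l m s : ℕ} (hk : s ≤ k) (hl : s ≤ l) (hm : s ≤ m)
    (hu : IsUnit (qPochhammer q q s)) :
    qBinomial q (k + l) k * qPochhammer q q m ≡ 1 [SMOD Ideal.span {q ^ (s + 1)}] := by
  have hs : qBinomial q (k + l) k * qPochhammer q q s * qPochhammer q q s ≡
      1 * qPochhammer q q s [SMOD Ideal.span {q ^ (s + 1)}] :=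
    calc _ ≡ qBinomial q (k + l) k * qPochhammer q q k * qPochhammer q q l
          [SMOD Ideal.span {q ^ (s + 1)}] := by
          gcongr <;> exact (qPochhammer_self_smodEq q ‹_›).symm
      _ = qPochhammer q q (k + l) := qBinomial_add_mul_qPochhammer q k l
      _ ≡ 1 * qPochhammer q q s [SMOD Ideal.span {q ^ (s + 1)}] := by
          rw [one_mul]; exact qPochhammer_self_smodEq q (by omega)
  calc _ ≡ qBinomial q (k + l) k * qPochhammer q q s [SMOD Ideal.span {q ^ (s + 1)}] := by
        gcongr; exact qPochhammer_self_smodEq q hm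
    _ ≡ 1 [SMOD Ideal.span {q ^ (s + 1)}] := hs.of_mul_right_of_isUnit hu

lemma prod_range_mul_pow (z : R) (k : ℕ) : ∏ i ∈ range k, z * q ^ i = q ^ k.choose 2 * z ^ k := by
  induction k with
  | zero => simp
  | succ k ih => rw [prod_range_succ, ih, Nat.succ_choose_two]; ring

end QAnalogues

section FiniteTripleProduct

variable {R : Type*} [CommRing R] (x : R)

lemma four_mul_choose_two_add (k : ℕ) : 4 * k.choose 2 + 3 * k = k * (2 * k + 1) := by
  induction k with
  | zero => rfl
  | succ k ih => rw [Nat.succ_choose_two]; nlinarith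

lemma pow_four_pow_choose_two_mul (k : ℕ) :
    (x ^ 4) ^ k.choose 2 * (-x ^ 3) ^ k = (-1) ^ k * x ^ (k * (2 * k + 1)) := by
  rw [← four_mul_choose_two_add, neg_pow, pow_add, ← pow_mul, ← pow_mul]
  ring

lemma prod_range_two_mul_pow_sub (m : ℕ) :
    ∏ i ∈ range (2 * m), (x ^ (4 * m) + -x ^ 3 * (x ^ 4) ^ i) =
      (-1) ^ m * x ^ (m * (2 * m + 1) + 4 * m * m) * qPochhammer x (x ^ 2) (2 * m) := by
  have hlow : ∏ i ∈ range m, (x ^ (4 * m) + -x ^ 3 * (x ^ 4) ^ i) =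
      (-1) ^ m * x ^ (m * (2 * m + 1)) * qPochhammer x (x ^ 4) m := by
    rw [← prod_range_reflect, ← pow_four_pow_choose_two_mul, ← prod_range_mul_pow,
      ← prod_range_reflect (fun i ↦ -x ^ 3 * (x ^ 4) ^ i), qPochhammer, ← prod_mul_distrib]
    refine prod_congr rfl fun i hi ↦ ?_
    rw [show 4 * m = 3 + 4 * (m - 1 - i) + (1 + 4 * i) by have := mem_range.mp hi; omega]
    ring
  have hhigh : ∏ i ∈ range m, (x ^ (4 * m) + -x ^ 3 * (x ^ 4) ^ (m + i)) =
      x ^ (4 * m * m) * qPochhammer (x * x ^ 2) (x ^ 4) m := by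
    rw [show x ^ (4 * m * m) = ∏ _i ∈ range m, x ^ (4 * m) by rw [prod_const, card_range, pow_mul],
      qPochhammer, ← prod_mul_distrib]
    exact prod_congr rfl fun i _ ↦ by ring
  rw [two_mul, prod_range_add, hlow, hhigh, ← two_mul, qPochhammer_two_mul,
    show (x ^ 2) ^ 2 = x ^ 4 by ring]
  ring

lemma sum_range_two_mul_succ_qBinomial (m : ℕ) :
    ∑ k ∈ range (2 * m + 1), (x ^ 4) ^ k.choose 2 * qBinomial (x ^ 4) (2 * m) k * (-x ^ 3) ^ k *
        (x ^ (4 * m)) ^ (2 * m - k) =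
      (-1) ^ m * x ^ (m * (2 * m + 1) + 4 * m * m) *
        (∑ j ∈ range (m + 1), (-1) ^ j * x ^ (j * (2 * j + 1)) * qBinomial (x ^ 4) (2 * m) (m + j) -
          ∑ j ∈ range m,
            (-1) ^ j * x ^ ((j + 1) * (2 * j + 1)) * qBinomial (x ^ 4) (2 * m) (m - 1 - j)) := by
  rw [show range (2 * m + 1) = range (m + (m + 1)) by congr 1; ring, sum_range_add,
    ← sum_range_reflect _ m, mul_sub, mul_sum, mul_sum, sub_eq_neg_add, ← sum_neg_distrib]
  congr 1 <;> refine sum_congr rfl fun j hj ↦ ?_ <;> have := mem_range.mp hj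
  · obtain ⟨k, rfl⟩ : ∃ k, m = k + 1 + j := ⟨m - 1 - j, by omega⟩
    have hsign : (-1 : R) ^ k = -((-1) ^ (k + 1 + j) * (-1) ^ j) := by
      rw [← pow_add, show k + 1 + j + j = k + 1 + 2 * j by ring, pow_add, pow_mul]
      simp [pow_succ]
    rw [show k + 1 + j - 1 - j = k by omega, show 2 * (k + 1 + j) - k = k + 2 + 2 * j by omega,
      mul_right_comm ((x ^ 4) ^ _), pow_four_pow_choose_two_mul, hsign]
    ring
  · obtain ⟨r, rfl⟩ : ∃ r, m = j + r := ⟨m - j, by omega⟩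
    rw [show 2 * (j + r) - (j + r + j) = r by omega, mul_right_comm ((x ^ 4) ^ _),
      pow_four_pow_choose_two_mul]
    ring

end FiniteTripleProduct

section PowerSeries

variable {R : Type*} [CommRing R]

lemma isUnit_qPochhammer {a : R⟦X⟧} (ha : constantCoeff a = 0) (q : R⟦X⟧) (n : ℕ) :
    IsUnit (qPochhammer a q n) := by
  simp [isUnit_iff_constantCoeff, qPochhammer, ha]

theorem qPochhammer_X_two_mul_eq_sum_qBinomial (m : ℕ) :
    qPochhammer (X : R⟦X⟧) (X ^ 2) (2 * m) =
      ∑ j ∈ range (m + 1), (-1) ^ j * X ^ (j * (2 * j + 1)) * qBinomial (X ^ 4) (2 * m) (m + j) -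
        ∑ j ∈ range m,
          (-1) ^ j * X ^ ((j + 1) * (2 * j + 1)) * qBinomial (X ^ 4) (2 * m) (m - 1 - j) := by
  have h := prod_add_mul_pow_eq_sum_qBinomial ((X : R⟦X⟧) ^ 4) (X ^ (4 * m)) (-X ^ 3) (2 * m)
  rw [prod_range_two_mul_pow_sub, sum_range_two_mul_succ_qBinomial, mul_assoc ((-1) ^ m),
    mul_assoc ((-1) ^ m)] at h
  exact X_pow_mul_inj.1 ((isUnit_neg_one.pow m).mul_left_cancel h)

/-- The terms `k = j` and `k = -(j+1)`, `j ≤ m`, of `Θ(q) = ∑_{k ∈ ℤ} (-1)^k q^(k(2k+1))`. -/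
noncomputable def truncatedTheta (m : ℕ) : R⟦X⟧ :=
  ∑ j ∈ range (m + 1), (-1) ^ j * (X ^ (j * (2 * j + 1)) - X ^ ((j + 1) * (2 * j + 1)))

theorem qPochhammer_X_mul_smodEq_truncatedTheta (m : ℕ) :
    qPochhammer (X : R⟦X⟧) (X ^ 2) (2 * m) * qPochhammer (X ^ 4) (X ^ 4) m ≡
      truncatedTheta m [SMOD Ideal.span {X ^ (4 * m)}] := by
  have hterm {e s k l : ℕ} (hk : s ≤ k) (hl : s ≤ l) (hm : s ≤ m) (he : 4 * m ≤ e + 4 * (s + 1))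
      (c : R⟦X⟧) : c * X ^ e * qBinomial (X ^ 4) (k + l) k * qPochhammer (X ^ 4) (X ^ 4) m ≡
        c * X ^ e [SMOD Ideal.span {X ^ (4 * m)}] := by
    have h := (qBinomial_mul_qPochhammer_smodEq_one (X ^ 4) hk hl hm
      (isUnit_qPochhammer (by simp) _ _)).mul_left_span (c * X ^ e)
    rw [mul_one, ← mul_assoc] at h
    refine h.mono ?_
    rw [Ideal.span_singleton_le_span_singleton, ← pow_mul, mul_assoc, ← pow_add]
    exact (pow_dvd_pow X he).mul_left c
  have htheta : truncatedTheta m = ∑ j ∈ range (m + 1), (-1) ^ j * (X : R⟦X⟧) ^ (j * (2 * j + 1)) -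
      ∑ j ∈ range m, (-1) ^ j * X ^ ((j + 1) * (2 * j + 1)) -
        (-1) ^ m * X ^ ((m + 1) * (2 * m + 1)) := by
    simp only [truncatedTheta, mul_sub, sum_sub_distrib, sum_range_succ _ m]
    ring
  rw [qPochhammer_X_two_mul_eq_sum_qBinomial, sub_mul, sum_mul, sum_mul, htheta]
  refine SModEq.trans (y := ∑ j ∈ range (m + 1), (-1) ^ j * (X : R⟦X⟧) ^ (j * (2 * j + 1)) -
      ∑ j ∈ range m, (-1) ^ j * X ^ ((j + 1) * (2 * j + 1)))
    (SModEq.sub (SModEq.sum fun j hj ↦ ?_) (SModEq.sum fun j hj ↦ ?_)) ?_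
  · have := mem_range.mp hj
    have : 4 * j ≤ j * (2 * j + 1) + 4 := by nlinarith [sq_nonneg ((j : ℤ) - 1)]
    rw [show 2 * m = m + j + (m - j) by omega]
    exact hterm (s := m - j) (by omega) (by omega) (by omega) (by omega) _
  · have := mem_range.mp hj
    have : 4 * j ≤ (j + 1) * (2 * j + 1) := by nlinarith [Nat.le_mul_self j]
    rw [show 2 * m = m - 1 - j + (m + 1 + j) by omega]
    exact hterm (s := m - 1 - j) (by omega) (by omega) (by omega) (by omega) _
  · rw [SModEq.sub_mem, sub_sub_cancel, Ideal.mem_span_singleton]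
    exact (pow_dvd_pow X (by nlinarith [Nat.le_mul_self m])).mul_left _

theorem truncatedTheta_mul_qPochhammer_neg_X_smodEq (m : ℕ) :
    truncatedTheta m * qPochhammer (-X : R⟦X⟧) (X ^ 2) (2 * m) ≡
      qPochhammer (X ^ 2) (X ^ 2) (2 * m) [SMOD Ideal.span {X ^ (4 * m)}] := by
  have htail : qPochhammer ((X : R⟦X⟧) ^ 2 * (X ^ 4) ^ m) (X ^ 4) m ≡ 1
      [SMOD Ideal.span {X ^ (4 * m)}] := by
    refine (qPochhammer_smodEq_one _ _ m).mono ?_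
    rw [Ideal.span_singleton_le_span_singleton, ← pow_mul, ← pow_add]
    exact pow_dvd_pow X (by omega)
  have hsplit : qPochhammer X (X ^ 2) (2 * m) * qPochhammer (X ^ 4) (X ^ 4) m *
      qPochhammer (-X : R⟦X⟧) (X ^ 2) (2 * m) = qPochhammer (X ^ 2) (X ^ 4) m *
        qPochhammer (X ^ 2 * (X ^ 4) ^ m) (X ^ 4) m * qPochhammer (X ^ 4) (X ^ 4) m := by
    rw [mul_right_comm, qPochhammer_mul_qPochhammer_neg, two_mul, qPochhammer_add,
      show ((X : R⟦X⟧) ^ 2) ^ 2 = X ^ 4 by ring]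
  have hmerge : qPochhammer ((X : R⟦X⟧) ^ 2) (X ^ 4) m * 1 * qPochhammer (X ^ 4) (X ^ 4) m =
      qPochhammer (X ^ 2) (X ^ 2) (2 * m) := by
    rw [qPochhammer_two_mul, mul_one, show ((X : R⟦X⟧) ^ 2) ^ 2 = X ^ 4 by ring,
      show (X : R⟦X⟧) ^ 2 * X ^ 2 = X ^ 4 by ring]
  have h := (qPochhammer_X_mul_smodEq_truncatedTheta (R := R) m).symm.mul
    (SModEq.refl (qPochhammer (-X : R⟦X⟧) (X ^ 2) (2 * m)))
  rw [hsplit] at h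
  have h' := ((SModEq.refl (qPochhammer ((X : R⟦X⟧) ^ 2) (X ^ 4) m)).mul htail).mul
    (SModEq.refl (qPochhammer ((X : R⟦X⟧) ^ 4) (X ^ 4) m))
  rw [hmerge] at h'
  exact h.trans h'

end PowerSeries

theorem HasProd.smodEq_prod_range {R : Type*} [CommRing R] [TopologicalSpace R] [T2Space R]
    {F : ℕ → R⟦X⟧} {P : R⟦X⟧} (hP : HasProd F P) {K N : ℕ}
    (hF : ∀ i ≥ K, F i ≡ 1 [SMOD Ideal.span {X ^ N}]) :
    P ≡ ∏ i ∈ range K, F i [SMOD Ideal.span {X ^ N}] := by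
  have hstable {s : Finset ℕ} (hs : range K ⊆ s) :
      ∏ i ∈ s, F i ≡ ∏ i ∈ range K, F i [SMOD Ideal.span {X ^ N}] := by
    rw [← prod_sdiff hs]
    simpa using (SModEq.prod fun i hi ↦ hF i (by simp at hi; omega)).mul
      (SModEq.refl (∏ i ∈ range K, F i))
  simp only [SModEq.sub_mem, Ideal.mem_span_singleton, X_pow_dvd_iff, map_sub, sub_eq_zero]
    at hstable ⊢
  intro d hd
  refine tendsto_nhds_unique (((WithPiTopology.continuous_coeff R d).tendsto P).comp hP)
    (tendsto_const_nhds.congr' ?_)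
  exact Filter.eventually_atTop.2 ⟨range K, fun s hs ↦ (hstable hs d hd).symm⟩

noncomputable def podSeries : ℤ⟦X⟧ := PowerSeries.mk fun n ↦ (podCount n : ℤ)

lemma Multiset.nodup_filter_iff_count_le_one {α : Type*} [DecidableEq α] (p : α → Prop)
    [DecidablePred p] (s : Multiset α) :
    (s.filter p).Nodup ↔ ∀ i ∈ s.toFinset, p i → s.count i ≤ 1 := by
  simp only [Multiset.nodup_iff_count_le_one, Multiset.count_filter, Multiset.mem_toFinset]
  refine ⟨fun h i _ hi ↦ by simpa [hi] using h i, fun h i ↦ ?_⟩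
  split_ifs with hi
  · by_cases hs : i ∈ s
    · exact h i hs hi
    · simp [Multiset.count_eq_zero_of_notMem hs]
  · exact zero_le_one

def podCharacter (i c : ℕ) : ℤ :=
  if i % 2 = 1 → c ≤ 1 then 1 else 0

lemma podSeries_eq_genFun : podSeries = Nat.Partition.genFun podCharacter := by
  ext n
  simp only [podSeries, coeff_mk, Nat.Partition.coeff_genFun, Finsupp.prod, podCount, podCharacter,
    card_filter, Multiset.nodup_filter_iff_count_le_one, Multiset.toFinsupp_support,
    Multiset.toFinsupp_apply]
  push_cast
  exact sum_congr rfl fun p _ ↦ prod_boole.symm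

noncomputable def podFactor (i : ℕ) : ℤ⟦X⟧ :=
  if Even i then 1 + X ^ (i + 1) else ∑' j, X ^ ((i + 1) * j)

lemma podFactor_mul_one_sub_X_pow_of_odd {i : ℕ} (hi : ¬Even i) :
    podFactor i * (1 - X ^ (i + 1)) = 1 := by
  simp_rw [podFactor, if_neg hi, pow_mul]
  exact WithPiTopology.tsum_pow_mul_one_sub_of_constantCoeff_eq_zero (by simp)

lemma podFactor_eq (i : ℕ) :
    podFactor i = 1 + ∑' j, podCharacter (i + 1) (j + 1) • X ^ ((i + 1) * (j + 1)) := by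
  by_cases hi : Even i
  · have hodd : (i + 1) % 2 = 1 := Nat.odd_iff.mp hi.add_one
    rw [podFactor, if_pos hi, tsum_eq_single 0 fun j hj ↦ by simp [podCharacter, hodd, hj]]
    simp [podCharacter, hodd]
  · have heven : (i + 1) % 2 = 0 := Nat.even_iff.mp (Nat.not_even_iff_odd.mp hi).add_one
    rw [podFactor, if_neg hi, tsum_eq_zero_add' ?_]
    · simp [podCharacter, heven]
    · have h : constantCoeff ((X : ℤ⟦X⟧) ^ (i + 1)) = 0 := by simp
      simp_rw [pow_mul, pow_succ ((X : ℤ⟦X⟧) ^ (i + 1))]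
      exact (WithPiTopology.summable_pow_of_constantCoeff_eq_zero h).mul_right _

lemma hasProd_podFactor : HasProd podFactor podSeries := by
  rw [podSeries_eq_genFun, funext podFactor_eq]
  exact Nat.Partition.hasProd_genFun podCharacter

lemma podFactor_smodEq_one (i : ℕ) : podFactor i ≡ 1 [SMOD Ideal.span {X ^ (i + 1)}] := by
  by_cases hi : Even i
  · rw [podFactor, if_pos hi, SModEq.sub_mem, add_sub_cancel_left]
    exact Ideal.mem_span_singleton_self _
  · have h : (1 : ℤ⟦X⟧) - X ^ (i + 1) ≡ 1 [SMOD Ideal.span {X ^ (i + 1)}] := by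
      rw [SModEq.sub_mem, sub_sub_cancel_left, neg_mem_iff]
      exact Ideal.mem_span_singleton_self _
    have h' := (SModEq.refl (podFactor i)).mul h
    rwa [podFactor_mul_one_sub_X_pow_of_odd hi, mul_one, SModEq.comm] at h'

lemma prod_podFactor_mul_qPochhammer (M : ℕ) :
    (∏ i ∈ range (2 * M), podFactor i) * qPochhammer (X ^ 2) (X ^ 2) M =
      qPochhammer (-X) (X ^ 2) M := by
  induction M with
  | zero => simp
  | succ M ih =>
    have heven : podFactor (2 * M) = 1 + X ^ (2 * M + 1) := if_pos (even_two_mul M)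
    have hodd := podFactor_mul_one_sub_X_pow_of_odd (i := 2 * M + 1) (by simp [parity_simps])
    rw [show 2 * (M + 1) = 2 * M + 1 + 1 by ring, prod_range_succ, prod_range_succ,
      qPochhammer_succ, qPochhammer_succ, ← ih, heven]
    linear_combination ((∏ i ∈ range (2 * M), podFactor i) * qPochhammer (X ^ 2) (X ^ 2) M *
      (1 + X ^ (2 * M + 1))) * hodd

theorem podSeries_mul_qPochhammer_smodEq (M : ℕ) :
    podSeries * qPochhammer (X ^ 2) (X ^ 2) M ≡ qPochhammer (-X) (X ^ 2) M
      [SMOD Ideal.span {X ^ (2 * M + 1)}] := by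
  rw [← prod_podFactor_mul_qPochhammer]
  refine (hasProd_podFactor.smodEq_prod_range fun i hi ↦ (podFactor_smodEq_one i).mono ?_).mul
    (SModEq.refl _)
  rw [Ideal.span_singleton_le_span_singleton]
  exact pow_dvd_pow X (by omega)

theorem truncatedTheta_mul_podSeries_smodEq_one (m : ℕ) :
    truncatedTheta m * podSeries ≡ 1 [SMOD Ideal.span {X ^ (4 * m)}] := by
  refine SModEq.of_mul_right_of_isUnit
    (isUnit_qPochhammer (a := X ^ 2) (by simp) (X ^ 2) (2 * m)) ?_
  have hpod := (podSeries_mul_qPochhammer_smodEq (2 * m)).mono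
    (Ideal.span_singleton_le_span_singleton.2 (pow_dvd_pow X (by omega : 4 * m ≤ 2 * (2 * m) + 1)))
  rw [mul_assoc, one_mul]
  exact ((SModEq.refl _).mul hpod).trans (truncatedTheta_mul_qPochhammer_neg_X_smodEq m)

lemma pod_eq_zero_of_neg {m : ℤ} (hm : m < 0) : pod m = 0 :=
  if_neg (by omega)

lemma coeff_X_pow_mul_podSeries (n e : ℕ) : coeff n (X ^ e * podSeries) = pod (n - e) := by
  rw [coeff_X_pow_mul', pod]
  split_ifs with h h' h'
  · simp [podSeries, show ((n : ℤ) - e).toNat = n - e by omega]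
  · omega
  · omega
  · rfl

lemma coeff_truncatedTheta_mul_podSeries (m n : ℕ) :
    coeff n (truncatedTheta m * podSeries) = ∑ j ∈ range (m + 1), (-1 : ℤ) ^ j *
      (pod ((n : ℤ) - (j : ℤ) * (2 * (j : ℤ) + 1)) -
        pod ((n : ℤ) - ((j : ℤ) + 1) * (2 * (j : ℤ) + 1))) := by
  simp only [truncatedTheta, sum_mul, map_sum, mul_assoc, sub_mul]
  refine sum_congr rfl fun j _ ↦ ?_
  rw [show ((-1 : ℤ⟦X⟧) ^ j) = C ((-1 : ℤ) ^ j) by simp, coeff_C_mul, map_sub,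
    coeff_X_pow_mul_podSeries, coeff_X_pow_mul_podSeries]
  push_cast
  rfl

theorem pod_recurrence (n : ℕ) (hn : 1 ≤ n) :
    ∑' j : ℕ, (-1 : ℤ) ^ j *
      (pod ((n : ℤ) - (j : ℤ) * (2 * (j : ℤ) + 1)) -
        pod ((n : ℤ) - ((j : ℤ) + 1) * (2 * (j : ℤ) + 1))) = 0 := by
  have hvanish (j : ℕ) (hj : j ∉ range (n + 1)) : (-1 : ℤ) ^ j *
      (pod ((n : ℤ) - (j : ℤ) * (2 * (j : ℤ) + 1)) -
        pod ((n : ℤ) - ((j : ℤ) + 1) * (2 * (j : ℤ) + 1))) = 0 := by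
    have : (n : ℤ) + 1 ≤ j := by simp at hj; omega
    rw [pod_eq_zero_of_neg (by nlinarith), pod_eq_zero_of_neg (by nlinarith), sub_zero, mul_zero]
  rw [tsum_eq_sum hvanish, ← coeff_truncatedTheta_mul_podSeries,
    coeff_eq_of_smodEq (truncatedTheta_mul_podSeries_smodEq_one n) (by omega), coeff_one,
    if_neg (by omega)]
end
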